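/- In the rally-point system with first server A, the probability of reaching α points for A and β points for B with A scoring last equals p_a^α p_b^β ∑_{r=min(β,1)}^{min(α,β)} C(α,r) C(β-1,r-1) (t_a t_b)^r, where t_a = (1-p_a)/p_a and t_b = (1-p_b)/p_b. -/

import Mathlib

open scoped BigOperators
open Filter

/-- Rally-point scoring: a trajectory is the list of rally winners (`true` = player A);
every rally scores a point for its winner, and the winner serves the next rally.
The first argument is the current server. -/
def rpWeight (pa pb : ℝ) : Bool → List Bool → ℝ
  | _, [] => 1
  | srv, w :: rest =>
      (if srv then (if w then pa else 1 - pa) else (if w then 1 - pb else pb)) *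
        rpWeight pa pb w rest

/-- Points scored by player A. -/
def rpScoreA (g : List Bool) : ℕ := g.count true

/-- Points scored by player B. -/
def rpScoreB (g : List Bool) : ℕ := g.count false

/-- A scores the last point. -/
def rpLastA (g : List Bool) : Prop := g.getLast? = some true

/-- B scores the last point. -/
def rpLastB (g : List Bool) : Prop := g.getLast? = some false

/-- Number of maximal runs of `false` in a list, the first argument being the previous value. -/
def falseRuns : Bool → List Bool → ℕ
  | _, [] => 0
  | prev, b :: rest => (if prev && !b then 1 else 0) + falseRuns b rest

/-- Number of A-interruptions: maximal blocks of consecutive points scored by B. -/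
def rpInter (g : List Bool) : ℕ := falseRuns true g

/-- Probability of a set of trajectories in the rally-point model, first server A. -/
noncomputable def rpPr (pa pb : ℝ) (E : Set (List Bool)) : ℝ :=
  ∑' g : List Bool, Set.indicator E (rpWeight pa pb true) g

/-- Conditional expectation of `f` given the event `E` in the rally-point model, first server A. -/
noncomputable def rpCondExp (pa pb : ℝ) (E : Set (List Bool)) (f : List Bool → ℝ) : ℝ :=
  (∑' g : List Bool, Set.indicator E (fun g => rpWeight pa pb true g * f g) g) / rpPr pa pb E

/-!
Split the trajectories that end with an A-point by their first rally. If `W_s(a, b)` is the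
total weight, from server `s`, of the trajectories with `a` A-points and `b` B-points before the
final A-point, this gives `W_s(a, b) = P_s(A) W_A(a - 1, b) + P_s(B) W_B(a, b - 1)`. The claimed
closed form for `W_A`, together with `W_B(a, b) = (1 - p_b) p_a^a p_b^b ∑_r C(a,r) C(b,r) x^r`
for `x = t_a t_b`, satisfies the same recurrence: the two inductive steps are Pascal's rule in
the first, respectively second, binomial coefficient, and they use only
`p_a p_b x = (1 - p_a)(1 - p_b)`.
-/

namespace RallyPoint

def rallyProb (pa pb : ℝ) (srv w : Bool) : ℝ :=
  if srv then (if w then pa else 1 - pa) else (if w then 1 - pb else pb)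

lemma rpWeight_cons (pa pb : ℝ) (srv w : Bool) (l : List Bool) :
    rpWeight pa pb srv (w :: l) = rallyProb pa pb srv w * rpWeight pa pb w l := rfl

def boolListsOfLength : ℕ → Finset (List Bool)
  | 0 => {[]}
  | n + 1 => (boolListsOfLength n).image (true :: ·) ∪ (boolListsOfLength n).image (false :: ·)

lemma mem_boolListsOfLength {n : ℕ} {l : List Bool} :
    l ∈ boolListsOfLength n ↔ l.length = n := by
  induction n generalizing l with
  | zero => simp [boolListsOfLength]
  | succ n ih =>
    cases l with
    | nil => simp [boolListsOfLength]
    | cons b l => cases b <;> simp [boolListsOfLength, ih]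

lemma sum_boolListsOfLength_succ {M : Type*} [AddCommMonoid M] (n : ℕ) (f : List Bool → M) :
    ∑ l ∈ boolListsOfLength (n + 1), f l =
      ∑ l ∈ boolListsOfLength n, f (true :: l) +
        ∑ l ∈ boolListsOfLength n, f (false :: l) := by
  rw [boolListsOfLength, Finset.sum_union, Finset.sum_image, Finset.sum_image]
  · exact fun _ _ _ _ h => List.cons_injective h
  · exact fun _ _ _ _ h => List.cons_injective h
  · simp [Finset.disjoint_left]

noncomputable def lastAWeight (pa pb : ℝ) (s : Bool) (a b : ℕ) : ℝ :=
  ∑ l ∈ boolListsOfLength (a + b) with l.count true = a, rpWeight pa pb s (l ++ [true])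

section Recurrence

variable (pa pb : ℝ) (s : Bool)

lemma lastAWeight_of_add_eq_succ {a b n : ℕ} (h : a + b = n + 1) :
    lastAWeight pa pb s a b =
      rallyProb pa pb s true * ∑ l ∈ boolListsOfLength n with l.count true + 1 = a,
          rpWeight pa pb true (l ++ [true]) +
        rallyProb pa pb s false * ∑ l ∈ boolListsOfLength n with l.count true = a,
          rpWeight pa pb false (l ++ [true]) := by
  simp only [lastAWeight, h, Finset.sum_filter, sum_boolListsOfLength_succ, Finset.mul_sum,
    List.cons_append, rpWeight_cons, List.count_cons_self]
  congr 1 <;> refine Finset.sum_congr rfl fun l _ => ?_ <;> split_ifs <;> simp_all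

lemma lastAWeight_zero_zero : lastAWeight pa pb s 0 0 = rallyProb pa pb s true := by
  simp [lastAWeight, boolListsOfLength, Finset.filter_singleton, rpWeight_cons, rpWeight]

lemma lastAWeight_succ_zero (a : ℕ) :
    lastAWeight pa pb s (a + 1) 0 = rallyProb pa pb s true * lastAWeight pa pb true a 0 := by
  have hlong : ∀ l ∈ boolListsOfLength a, l.count true ≠ a + 1 := fun l hl => by
    have := List.count_le_length (a := true) (l := l)
    rw [mem_boolListsOfLength.mp hl] at this
    omega
  rw [lastAWeight_of_add_eq_succ pa pb s (a := a + 1) (b := 0) rfl, lastAWeight,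
    Finset.filter_false_of_mem hlong]
  simp

lemma lastAWeight_zero_succ (b : ℕ) :
    lastAWeight pa pb s 0 (b + 1) = rallyProb pa pb s false * lastAWeight pa pb false 0 b := by
  rw [lastAWeight_of_add_eq_succ pa pb s (a := 0) (b := b + 1) (n := b) (by omega), lastAWeight]
  simp

lemma lastAWeight_succ_succ (a b : ℕ) :
    lastAWeight pa pb s (a + 1) (b + 1) =
      rallyProb pa pb s true * lastAWeight pa pb true a (b + 1) +
        rallyProb pa pb s false * lastAWeight pa pb false (a + 1) b := by
  rw [lastAWeight_of_add_eq_succ pa pb s (a := a + 1) (b := b + 1) (n := a + b + 1) (by omega),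
    lastAWeight, lastAWeight, Nat.add_right_comm a 1 b]
  simp only [add_left_inj]
  rfl

end Recurrence

section InterruptionSums

variable {R : Type*} [CommSemiring R] (x : R)

-- For `β = 0` the range is `{0}` and the truncated `C(β - 1, r - 1)` is `C(0, 0) = 1`.
def interruptionSumA (α β : ℕ) : R :=
  ∑ r ∈ Finset.Icc (min β 1) (min α β),
    (α.choose r : R) * ((β - 1).choose (r - 1) : R) * x ^ r

def interruptionSumB (m n : ℕ) : R :=
  ∑ r ∈ Finset.range (m + 1), (m.choose r : R) * (n.choose r : R) * x ^ r

lemma interruptionSumA_zero_right (m : ℕ) : interruptionSumA x m 0 = 1 := by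
  simp [interruptionSumA]

lemma interruptionSumB_zero_right (m : ℕ) : interruptionSumB x m 0 = 1 := by
  simp [interruptionSumB, Finset.sum_range_succ']

lemma interruptionSumB_zero_left (n : ℕ) : interruptionSumB x 0 n = 1 := by
  simp [interruptionSumB]

lemma interruptionSumA_succ_right (m n : ℕ) :
    interruptionSumA x m (n + 1) =
      ∑ r ∈ Finset.range m, (m.choose (r + 1) : R) * (n.choose r : R) * x ^ (r + 1) := by
  have hvanish : ∀ r ∈ Finset.Icc 1 m, r ∉ Finset.Icc 1 (min m (n + 1)) →
      (m.choose r : R) * (n.choose (r - 1) : R) * x ^ r = 0 := fun r hr hr' => by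
    rw [Nat.choose_eq_zero_of_lt (n := n) (k := r - 1) (by simp at hr hr'; omega)]
    simp
  rw [interruptionSumA, min_eq_right (Nat.le_add_left 1 n), Nat.add_sub_cancel,
    Finset.sum_subset (Finset.Icc_subset_Icc_right (min_le_left _ _)) hvanish,
    ← Finset.Ico_add_one_right_eq_Icc, Finset.sum_Ico_eq_sum_range]
  simp [add_comm 1]

lemma interruptionSumA_succ_succ (m n : ℕ) :
    interruptionSumA x (m + 1) (n + 1) =
      interruptionSumA x m (n + 1) + x * interruptionSumB x m n := by
  calc interruptionSumA x (m + 1) (n + 1)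
      = ∑ r ∈ Finset.range (m + 1), (m.choose (r + 1) : R) * (n.choose r : R) * x ^ (r + 1) +
          ∑ r ∈ Finset.range (m + 1), x * ((m.choose r : R) * (n.choose r : R) * x ^ r) := by
        rw [interruptionSumA_succ_right, ← Finset.sum_add_distrib]
        refine Finset.sum_congr rfl fun r _ => ?_
        rw [Nat.choose_succ_succ', Nat.cast_add]
        ring
    _ = interruptionSumA x m (n + 1) + x * interruptionSumB x m n := by
        rw [Finset.sum_range_succ _ m, Nat.choose_succ_self, interruptionSumA_succ_right,
          interruptionSumB, Finset.mul_sum]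
        simp

lemma interruptionSumB_succ_right (m n : ℕ) :
    interruptionSumB x m (n + 1) = interruptionSumA x m (n + 1) + interruptionSumB x m n := by
  rw [interruptionSumA_succ_right, interruptionSumB, interruptionSumB, Finset.sum_range_succ' _ m,
    Finset.sum_range_succ' _ m, ← add_assoc, ← Finset.sum_add_distrib]
  congr 1
  · refine Finset.sum_congr rfl fun r _ => ?_
    rw [Nat.choose_succ_succ' n, Nat.cast_add]
    ring
  · simp

end InterruptionSums

theorem lastAWeight_eq_interruptionSum {pa pb x : ℝ} (hx : pa * pb * x = (1 - pa) * (1 - pb)) :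
    ∀ a b : ℕ,
      lastAWeight pa pb true a b = pa ^ (a + 1) * pb ^ b * interruptionSumA x (a + 1) b ∧
        lastAWeight pa pb false a b = (1 - pb) * pa ^ a * pb ^ b * interruptionSumB x a b
  | 0, 0 => by
    simp [lastAWeight_zero_zero, rallyProb, interruptionSumA_zero_right,
      interruptionSumB_zero_right]
  | a + 1, 0 => by
    obtain ⟨ihA, -⟩ := lastAWeight_eq_interruptionSum hx a 0
    simp only [lastAWeight_succ_zero, ihA, rallyProb, ↓reduceIte, Bool.false_eq_true,
      interruptionSumA_zero_right, interruptionSumB_zero_right]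
    constructor <;> ring
  | 0, b + 1 => by
    obtain ⟨-, ihB⟩ := lastAWeight_eq_interruptionSum hx 0 b
    simp only [lastAWeight_zero_succ, ihB, rallyProb, ↓reduceIte, Bool.false_eq_true,
      interruptionSumA_succ_right, interruptionSumB_zero_left]
    constructor
    · simp only [zero_add, Finset.sum_range_one, Nat.choose_self, Nat.choose_zero_right,
        Nat.cast_one, one_mul, pow_one]
      linear_combination -pb ^ b * hx
    · ring
  | a + 1, b + 1 => by
    obtain ⟨ihA, -⟩ := lastAWeight_eq_interruptionSum hx a (b + 1)
    obtain ⟨-, ihB⟩ := lastAWeight_eq_interruptionSum hx (a + 1) b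
    simp only [lastAWeight_succ_succ, ihA, ihB, rallyProb, ↓reduceIte, Bool.false_eq_true,
      interruptionSumA_succ_succ, interruptionSumB_succ_right]
    constructor
    · linear_combination -(pa ^ (a + 1) * pb ^ b * interruptionSumB x (a + 1) b) * hx
    · ring

lemma rpPr_lastA_eq_lastAWeight (pa pb : ℝ) (a b : ℕ) :
    rpPr pa pb {g | rpScoreA g = a + 1 ∧ rpScoreB g = b ∧ rpLastA g} =
      lastAWeight pa pb true a b := by
  have hevent : {g | rpScoreA g = a + 1 ∧ rpScoreB g = b ∧ rpLastA g} =
      ↑(((boolListsOfLength (a + b)).filter (·.count true = a)).image (· ++ [true])) := by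
    ext g
    simp only [Set.mem_ofPred_eq, Finset.coe_image, Finset.coe_filter, Set.mem_image,
      mem_boolListsOfLength, rpScoreA, rpScoreB, rpLastA, List.getLast?_eq_some_iff]
    have hcount (l : List Bool) : (l ++ [true]).count true = l.count true + 1 ∧
        (l ++ [true]).count false = l.count false := by
      simp
    constructor
    · rintro ⟨hA, hB, l, rfl⟩
      have := l.count_true_add_count_false
      obtain ⟨hA', hB'⟩ := hcount l
      exact ⟨l, ⟨by omega, by omega⟩, rfl⟩
    · rintro ⟨l, ⟨hlen, hA⟩, rfl⟩
      have := l.count_true_add_count_false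
      obtain ⟨hA', hB'⟩ := hcount l
      exact ⟨by omega, by omega, l, rfl⟩
  rw [rpPr, hevent, ← tsum_subtype, Finset.tsum_subtype',
    Finset.sum_image fun _ _ _ _ => List.append_cancel_right, lastAWeight]

end RallyPoint

theorem stmt_13_general (α β : ℕ) (hα : 1 ≤ α) (pa pb : ℝ) (hpa0 : 0 < pa)
    (hpb0 : 0 < pb) :
    rpPr pa pb {g : List Bool | rpScoreA g = α ∧ rpScoreB g = β ∧ rpLastA g} =
      pa ^ α * pb ^ β *
        ∑ r ∈ Finset.Icc (min β 1) (min α β),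
          (α.choose r : ℝ) * ((β - 1).choose (r - 1) : ℝ) *
            ((1 - pa) / pa * ((1 - pb) / pb)) ^ r := by
  obtain ⟨a, rfl⟩ : ∃ a, α = a + 1 := ⟨α - 1, by omega⟩
  have hx : pa * pb * ((1 - pa) / pa * ((1 - pb) / pb)) = (1 - pa) * (1 - pb) := by
    field_simp
  rw [RallyPoint.rpPr_lastA_eq_lastAWeight, (RallyPoint.lastAWeight_eq_interruptionSum hx a β).1]
  rfl

theorem stmt_13 (α β : ℕ) (hα : 1 ≤ α) (pa pb : ℝ) (hpa0 : 0 < pa) (hpa1 : pa ≤ 1)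
    (hpb0 : 0 < pb) (hpb1 : pb ≤ 1) :
    rpPr pa pb {g : List Bool | rpScoreA g = α ∧ rpScoreB g = β ∧ rpLastA g} =
      pa ^ α * pb ^ β *
        ∑ r ∈ Finset.Icc (min β 1) (min α β),
          (α.choose r : ℝ) * ((β - 1).choose (r - 1) : ℝ) *
            ((1 - pa) / pa * ((1 - pb) / pb)) ^ r :=
  stmt_13_general α β hα pa pb hpa0 hpb0
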